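/- arXiv:1402.6799 — 3 statements merged into one kernel-verified Lean document; each statement's English description precedes it below -/
import Mathlib

section
/- For each n ≥ 1, the assignment φ ↦ ≼_φ is a bijection between the set Hp(n) of min-heaps of size n and the set of partial orders ≼ on {1,…,n} such that (i) i ≼ j implies i ≤ j, and (ii) for each i the downset {j : j ≼ i} is linearly ordered by ≼. The inverse bijection sends such a partial order ≼ to the function φ with φ(0) = 0 and φ(j) = max{ i ∈ {0,…,j−1} : i = 0 or i ≼ j } for j ∈ {1,…,n}. -/
/-! ### Min-heaps and inc-lists: basic combinatorics -/

/-- Auxiliary fuelled computation of the depth of a node in a min-heap. -/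
def dpAux (φ : ℕ → ℕ) : ℕ → ℕ → ℕ
  | 0, _ => 0
  | fuel + 1, i => if i = 0 then 0 else dpAux φ fuel (φ i) + 1

/-- The depth `dp φ i` of `i` in the min-heap `φ`: for a min-heap and `i ≥ 1`
this is the least `k ≥ 1` with `φ^[k] i = 0`. -/
def dp (φ : ℕ → ℕ) (i : ℕ) : ℕ := dpAux φ i i

/-- The order relation `i ≼_φ j` associated to a min-heap `φ`:
`i ≼_φ j` iff `i = φ^k(j)` for some `k ≥ 0`. -/
def hle (φ : ℕ → ℕ) (i j : ℕ) : Prop := ∃ k, i = φ^[k] j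

/-- `φ` is a min-heap of size `n`: `φ 0 = 0` and `φ i < i` for `i ∈ {1,…,n}`.
(The behaviour of `φ` outside `{0,…,n}` is irrelevant.) -/
def IsHeap (n : ℕ) (φ : ℕ → ℕ) : Prop :=
  φ 0 = 0 ∧ ∀ i, 1 ≤ i → i ≤ n → φ i < i

/-- A normalised min-heap of size `n`: additionally `φ i = 0` outside `{0,…,n}`,
so that normalised heaps correspond bijectively to functions `{0,…,n} → {0,…,n}`. -/
def IsHeapN (n : ℕ) (φ : ℕ → ℕ) : Prop :=
  IsHeap n φ ∧ ∀ i, n < i → φ i = 0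

/-- `α` is an inc-list of length `n`: `α 0 = 0` and `α` is strictly increasing
on `{0,…,n}`. -/
def IsInc (n : ℕ) (α : ℕ → ℕ) : Prop :=
  α 0 = 0 ∧ ∀ i j, i < j → j ≤ n → α i < α j

/-- A normalised inc-list of length `n`: additionally `α i = 0` outside `{0,…,n}`. -/
def IsIncN (n : ℕ) (α : ℕ → ℕ) : Prop :=
  IsInc n α ∧ ∀ i, n < i → α i = 0

/-- `φ` is a `ψ`-compatible family of heaps for `ψ ∈ Hp(n)`:
`φ i ∈ Hp(dp_ψ(i))` for each `i ∈ {1,…,n}`, and whenever `ψ i = j ≥ 1`,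
`φ j` is the restriction of `φ i` to `{0,…,dp_ψ(i) − 1}`. -/
def CompatFam (n : ℕ) (ψ : ℕ → ℕ) (φ : ℕ → ℕ → ℕ) : Prop :=
  (∀ i, 1 ≤ i → i ≤ n → IsHeap (dp ψ i) (φ i)) ∧
  (∀ i, 1 ≤ i → i ≤ n → 1 ≤ ψ i → ∀ j, j ≤ dp ψ i - 1 → φ (ψ i) j = φ i j)

/-- The heap `ψ⋆φ` obtained from `ψ ∈ Hp(n)` and a `ψ`-compatible family `φ`:
`(ψ⋆φ)(0) = 0` and `(ψ⋆φ)(i) = ψ^[dp_ψ(i) − φ_i(dp_ψ(i))](i)`. -/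
def star (ψ : ℕ → ℕ) (φ : ℕ → ℕ → ℕ) (i : ℕ) : ℕ :=
  if i = 0 then 0 else ψ^[dp ψ i - φ i (dp ψ i)] i

/-- `r` is a partial order on `{1,…,n}`, contained in the natural order,
in which every downset is linearly ordered. -/
def GoodOrder (n : ℕ) (r : ℕ → ℕ → Prop) : Prop :=
  (∀ i j, r i j → 1 ≤ i ∧ j ≤ n) ∧
  (∀ i, 1 ≤ i → i ≤ n → r i i) ∧
  (∀ i j k, r i j → r j k → r i k) ∧
  (∀ i j, r i j → r j i → i = j) ∧
  (∀ i j, r i j → i ≤ j) ∧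
  (∀ i j l, r i l → r j l → r i j ∨ r j i)

/-- The order relation on `{1,…,n}` associated to a min-heap of size `n`. -/
def heapRel (n : ℕ) (φ : ℕ → ℕ) (i j : ℕ) : Prop := 1 ≤ i ∧ j ≤ n ∧ hle φ i j

open Classical in
/-- The min-heap `α*φ` associated to an inc-list `α ∈ Inc(n)` and a heap
`φ ∈ Hp(α(n))`, given by the explicit formula
`(α*φ)(j) = max { i ∈ {0,…,j−1} : i = 0 or α(i) ≼_φ α(j) }`. -/
noncomputable def astar (α φ : ℕ → ℕ) (j : ℕ) : ℕ :=
  if j = 0 then 0 else Nat.findGreatest (fun i => 1 ≤ i ∧ hle φ (α i) (α j)) (j - 1)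

/-- The inc-list `α^φ_p` of Definition "projection-free": with
`{p_1 ≺ … ≺ p_m = p}` the `≼_{α*φ}`-downset of `p` (so `p_i = (α*φ)^[m−i](p)`),
`α^φ_p(i) = dp_φ(α(p_i))`. -/
noncomputable def aphiFam (α φ : ℕ → ℕ) (p i : ℕ) : ℕ :=
  if i = 0 then 0 else dp φ (α ((astar α φ)^[dp (astar α φ) p - i] p))


/-! ### Auxiliary lemmas -/

private lemma iterZero {f : ℕ → ℕ} (h0 : f 0 = 0) (k : ℕ) : f^[k] 0 = 0 := by
  induction k with
  | zero => rfl
  | succ k ih => rw [Function.iterate_succ_apply, h0, ih]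

private lemma heapLe {n : ℕ} {f : ℕ → ℕ} (h : IsHeap n f) {x : ℕ} (hx : x ≤ n) :
    f x ≤ x := by
  rcases Nat.eq_zero_or_pos x with rfl | hx1
  · exact le_of_eq h.1
  · exact le_of_lt (h.2 x hx1 hx)

private lemma heapIterLe {n : ℕ} {f : ℕ → ℕ} (h : IsHeap n f) (k : ℕ) :
    ∀ x, x ≤ n → f^[k] x ≤ x := by
  induction k with
  | zero => intro x _; exact le_rfl
  | succ k ih =>
    intro x hx
    rw [Function.iterate_succ_apply]
    exact le_trans (ih (f x) (le_trans (heapLe h hx) hx)) (heapLe h hx)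

private lemma hle_trans' {f : ℕ → ℕ} {i j k : ℕ} (h1 : hle f i j) (h2 : hle f j k) :
    hle f i k := by
  obtain ⟨a, ha⟩ := h1; obtain ⟨b, hb⟩ := h2
  exact ⟨a + b, by rw [Function.iterate_add_apply, ← hb, ha]⟩

private lemma hle_le {n : ℕ} {f : ℕ → ℕ} (h : IsHeap n f) {i j : ℕ} (hj : j ≤ n)
    (hij : hle f i j) : i ≤ j := by
  obtain ⟨k, hk⟩ := hij
  rw [hk]; exact heapIterLe h k j hj

open Classical in
/-- The candidate inverse map. -/
noncomputable def phiOf (r : ℕ → ℕ → Prop) (j : ℕ) : ℕ :=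
  if j = 0 then 0 else Nat.findGreatest (fun i => r i j) (j - 1)

private lemma goodOrder_heap {n : ℕ} (f : ℕ → ℕ) (hf : IsHeapN n f) :
    GoodOrder n (heapRel n f) := by
  obtain ⟨hH, _⟩ := hf
  refine ⟨fun i j h => ⟨h.1, h.2.1⟩, fun i hi1 hin => ⟨hi1, hin, 0, rfl⟩,
    fun i j k h1 h2 => ⟨h1.1, h2.2.1, hle_trans' h1.2.2 h2.2.2⟩,
    fun i j h1 h2 => le_antisymm (hle_le hH h1.2.1 h1.2.2) (hle_le hH h2.2.1 h2.2.2),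
    fun i j h => hle_le hH h.2.1 h.2.2, ?_⟩
  intro i j l h1 h2
  obtain ⟨a, ha⟩ := h1.2.2
  obtain ⟨b, hb⟩ := h2.2.2
  rcases le_total a b with hab | hab
  · right
    refine ⟨h2.1, le_trans (hle_le hH h1.2.1 h1.2.2) h1.2.1, b - a, ?_⟩
    rw [hb, ha, ← Function.iterate_add_apply]
    congr 1; omega
  · left
    refine ⟨h1.1, le_trans (hle_le hH h2.2.1 h2.2.2) h2.2.1, a - b, ?_⟩
    rw [ha, hb, ← Function.iterate_add_apply]
    congr 1; omega

/-- Characterisation of the heap associated to a good order. -/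
private lemma heap_char {n : ℕ} {r : ℕ → ℕ → Prop} (hr : GoodOrder n r)
    {f : ℕ → ℕ} (hf : IsHeapN n f) (hiff : ∀ i j, heapRel n f i j ↔ r i j) :
    ∀ j, 1 ≤ j → j ≤ n →
      f j < j ∧ (f j = 0 ∨ r (f j) j) ∧ ∀ i, i < j → r i j → i ≤ f j := by
  intro j hj1 hjn
  obtain ⟨hH, hN⟩ := hf
  refine ⟨hH.2 j hj1 hjn, ?_, ?_⟩
  · rcases Nat.eq_zero_or_pos (f j) with h0 | hpos
    · exact Or.inl h0
    · exact Or.inr ((hiff _ _).1 ⟨hpos, hjn, 1, rfl⟩)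
  · intro i hij hrij
    obtain ⟨hi1, _, k, hk⟩ := (hiff i j).2 hrij
    rcases Nat.eq_zero_or_pos k with rfl | hk1
    · simp only [Function.iterate_zero, id_eq] at hk; omega
    · have hik : i = f^[k-1] (f j) := by
        rw [hk, ← Function.iterate_succ_apply]
        congr 1; omega
      rw [hik]
      exact heapIterLe hH (k-1) (f j) (le_trans (le_of_lt (hH.2 j hj1 hjn)) hjn)

private lemma phiOf_isHeapN {n : ℕ} {r : ℕ → ℕ → Prop} (hr : GoodOrder n r) :
    IsHeapN n (phiOf r) := by
  refine ⟨⟨by simp [phiOf], ?_⟩, ?_⟩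
  · intro i hi1 hin
    have h : phiOf r i ≤ i - 1 := by
      classical
      simp only [phiOf, if_neg (by omega : i ≠ 0)]
      exact Nat.findGreatest_le _
    omega
  · intro i hni
    rcases eq_or_ne i 0 with rfl | h0
    · simp [phiOf]
    · classical
      simp only [phiOf, if_neg h0]
      rw [Nat.findGreatest_eq_zero_iff]
      intro k _ _ hk
      exact absurd (hr.1 k i hk).2 (by omega)

private lemma phiOf_spec_pos {r : ℕ → ℕ → Prop} {j : ℕ}
    (hj1 : 1 ≤ j) (hpos : 0 < phiOf r j) : r (phiOf r j) j := by
  classical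
  have h0 : j ≠ 0 := by omega
  simp only [phiOf, if_neg h0] at hpos ⊢
  exact (Nat.findGreatest_eq_iff.1 rfl).2.1 (Nat.pos_iff_ne_zero.mp hpos)

private lemma phiOf_hle {n : ℕ} {r : ℕ → ℕ → Prop} (hr : GoodOrder n r) :
    ∀ j i, r i j → hle (phiOf r) i j := by
  intro j
  induction j using Nat.strong_induction_on with
  | _ j ih =>
    intro i hij
    have hi1 : 1 ≤ i := (hr.1 i j hij).1
    have hjn : j ≤ n := (hr.1 i j hij).2
    have hilej : i ≤ j := hr.2.2.2.2.1 i j hij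
    rcases eq_or_lt_of_le hilej with rfl | hlt
    · exact ⟨0, rfl⟩
    · set m := phiOf r j with hm
      have hmge : i ≤ m := by
        classical
        rw [hm]
        simp only [phiOf, if_neg (by omega : j ≠ 0)]
        exact Nat.le_findGreatest (by omega) hij
      have hmpos : 0 < m := lt_of_lt_of_le hi1 hmge
      have hrmj : r m j := phiOf_spec_pos (by omega) hmpos
      have hmlt : m < j := by
        have h2 : m ≤ j - 1 := by
          classical
          rw [hm]; simp only [phiOf, if_neg (by omega : j ≠ 0)]
          exact Nat.findGreatest_le _
        omega
      have him : r i m := by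
        rcases hr.2.2.2.2.2 i m j hij hrmj with h | h
        · exact h
        · have hmi : m ≤ i := hr.2.2.2.2.1 m i h
          have hieq : i = m := le_antisymm hmge hmi
          rw [hieq]
          exact hr.2.1 m hmpos (le_trans (le_of_lt hmlt) hjn)
      exact hle_trans' (ih m hmlt i him) ⟨1, rfl⟩

private lemma phiOf_rel_fwd {n : ℕ} {r : ℕ → ℕ → Prop} (hr : GoodOrder n r) :
    ∀ k i j, 1 ≤ i → j ≤ n → i = (phiOf r)^[k] j → r i j := by
  intro k
  induction k with
  | zero =>
    intro i j hi hj hk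
    simp only [Function.iterate_zero, id_eq] at hk
    subst hk; exact hr.2.1 i hi hj
  | succ k ih =>
    intro i j hi hj hk
    rw [Function.iterate_succ_apply] at hk
    have hN := phiOf_isHeapN (n := n) hr
    have hj1 : 1 ≤ j := by
      by_contra h
      have hj0 : j = 0 := by omega
      rw [hj0, hN.1.1, iterZero hN.1.1 k] at hk; omega
    have hmpos : 0 < phiOf r j := by
      by_contra h
      have h0 : phiOf r j = 0 := by omega
      rw [h0, iterZero hN.1.1 k] at hk; omega
    have hmlt := hN.1.2 j hj1 hj
    have hrmj := phiOf_spec_pos hj1 hmpos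
    exact hr.2.2.1 i (phiOf r j) j (ih i (phiOf r j) hi (by omega) hk) hrmj

private lemma phiOf_rel {n : ℕ} {r : ℕ → ℕ → Prop} (hr : GoodOrder n r) :
    ∀ i j, heapRel n (phiOf r) i j ↔ r i j := by
  intro i j
  constructor
  · rintro ⟨hi1, hjn, k, hk⟩
    exact phiOf_rel_fwd hr k i j hi1 hjn hk
  · intro h
    exact ⟨(hr.1 i j h).1, (hr.1 i j h).2, phiOf_hle hr j i h⟩

/-- For each `n ≥ 1`, the assignment `φ ↦ ≼_φ` is a bijection
between (normalised) min-heaps of size `n` and partial orders on `{1,…,n}`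
contained in the natural order with linearly ordered downsets; the inverse
sends such an order `r` to `j ↦ max { i ∈ {0,…,j−1} : i = 0 or r i j }`. -/
theorem heap_order_bijection (n : ℕ) (hn : 1 ≤ n) :
    (∀ φ : ℕ → ℕ, IsHeapN n φ → GoodOrder n (heapRel n φ)) ∧
    (∀ r : ℕ → ℕ → Prop, GoodOrder n r →
      ∃! φ : ℕ → ℕ, IsHeapN n φ ∧ ∀ i j, heapRel n φ i j ↔ r i j) ∧
    (∀ r : ℕ → ℕ → Prop, GoodOrder n r → ∀ φ : ℕ → ℕ, IsHeapN n φ →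
      (∀ i j, heapRel n φ i j ↔ r i j) →
      ∀ j, 1 ≤ j → j ≤ n →
        φ j < j ∧ (φ j = 0 ∨ r (φ j) j) ∧ ∀ i, i < j → r i j → i ≤ φ j) :=  by
  refine ⟨fun f hf => goodOrder_heap f hf, ?_, ?_⟩
  · intro r hr
    refine ⟨phiOf r, ⟨phiOf_isHeapN hr, phiOf_rel hr⟩, ?_⟩
    intro g ⟨hg, hgiff⟩
    funext j
    rcases Nat.lt_or_ge n j with h | h
    · rw [hg.2 j h, (phiOf_isHeapN hr).2 j h]
    · rcases Nat.eq_zero_or_pos j with rfl | hj1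
      · rw [hg.1.1, (phiOf_isHeapN hr).1.1]
      · obtain ⟨_, hg2, hg3⟩ := heap_char hr hg hgiff j hj1 h
        obtain ⟨hp1, hp2, hp3⟩ := heap_char hr (phiOf_isHeapN hr) (phiOf_rel hr) j hj1 h
        have hgj : g j < j := hg.1.2 j hj1 h
        have h1 : g j ≤ phiOf r j := by
          rcases hg2 with h0 | hrgj
          · omega
          · exact hp3 (g j) hgj hrgj
        have h2 : phiOf r j ≤ g j := by
          rcases hp2 with h0 | hrpj
          · omega
          · exact hg3 (phiOf r j) hp1 hrpj
        omega
  · intro r hr f hf hiff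
    exact heap_char hr hf hiff
end

section
/- Let ψ ∈ Hp(n) and let φ be a ψ-compatible family of heaps. Then the function ψ⋆φ is a min-heap of size n, and its associated order relation is characterized by: for all i, j ∈ {1,…,n}, i ≼_{ψ⋆φ} j if and only if i ≼_ψ j and dp_ψ(i) ≼_{φ_j} dp_ψ(j). -/
section Aux

variable {n : ℕ} {ψ : ℕ → ℕ} {φ : ℕ → ℕ → ℕ}

lemma heap_le_self (hψ : IsHeap n ψ) {j : ℕ} (hj : j ≤ n) : ψ j ≤ j := by
  rcases Nat.eq_zero_or_pos j with h | h
  · simp [h, hψ.1]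
  · exact (hψ.2 j h hj).le

lemma heap_iter_le (hψ : IsHeap n ψ) {j : ℕ} (hj : j ≤ n) (k : ℕ) : ψ^[k] j ≤ j := by
  induction k generalizing j with
  | zero => simp
  | succ k ih =>
    rw [Function.iterate_succ_apply]
    exact le_trans (ih (le_trans (heap_le_self hψ hj) hj)) (heap_le_self hψ hj)

lemma heap_iter_zero (hψ : IsHeap n ψ) (k : ℕ) : ψ^[k] 0 = 0 :=
  Function.iterate_fixed hψ.1 k

lemma dp_zero : dp ψ 0 = 0 := by simp [dp, dpAux]

lemma dpAux_succ {j : ℕ} (hjne : j ≠ 0) (f : ℕ) :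
    dpAux ψ (f + 1) j = dpAux ψ f (ψ j) + 1 := by
  simp [dpAux, hjne]

lemma dpAux_eq (hψ : IsHeap n ψ) :
    ∀ j, j ≤ n → ∀ fuel, j ≤ fuel → dpAux ψ fuel j = dp ψ j := by
  intro j
  induction j using Nat.strong_induction_on with
  | _ j ih =>
    intro hjn fuel hf
    rcases Nat.eq_zero_or_pos j with h0 | h1
    · subst h0
      cases fuel <;> simp [dpAux, dp]
    · have hjne : j ≠ 0 := by omega
      have hlt := hψ.2 j h1 hjn
      obtain ⟨f, rfl⟩ : ∃ f, fuel = f + 1 := ⟨fuel - 1, by omega⟩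
      obtain ⟨g, hg⟩ : ∃ g, j = g + 1 := ⟨j - 1, by omega⟩
      have h1' : dpAux ψ (f + 1) j = dpAux ψ f (ψ j) + 1 := dpAux_succ hjne f
      have h2' : dp ψ j = dpAux ψ g (ψ j) + 1 := by
        rw [dp, hg, dpAux_succ (by omega : g + 1 ≠ 0), ← hg]
      rw [h1', h2', ih (ψ j) hlt (le_trans hlt.le hjn) f (by omega),
        ih (ψ j) hlt (le_trans hlt.le hjn) g (by omega)]

lemma dp_succ (hψ : IsHeap n ψ) {j : ℕ} (h1 : 1 ≤ j) (hjn : j ≤ n) :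
    dp ψ j = dp ψ (ψ j) + 1 := by
  have hlt := hψ.2 j h1 hjn
  obtain ⟨g, hg⟩ : ∃ g, j = g + 1 := ⟨j - 1, by omega⟩
  have h2' : dp ψ j = dpAux ψ g (ψ j) + 1 := by
    rw [dp, hg, dpAux_succ (by omega : g + 1 ≠ 0), ← hg]
  rw [h2', dpAux_eq hψ (ψ j) (le_trans hlt.le hjn) g (by omega)]

lemma dp_pos (hψ : IsHeap n ψ) {j : ℕ} (h1 : 1 ≤ j) (hjn : j ≤ n) : 1 ≤ dp ψ j := by
  rw [dp_succ hψ h1 hjn]; omega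

lemma dp_iter (hψ : IsHeap n ψ) {j : ℕ} (hjn : j ≤ n) :
    ∀ k, dp ψ (ψ^[k] j) = dp ψ j - k := by
  intro k
  induction k generalizing j with
  | zero => simp
  | succ k ih =>
    rcases Nat.eq_zero_or_pos j with h0 | h1
    · subst h0
      rw [heap_iter_zero hψ, dp_zero]
      omega
    · rw [Function.iterate_succ_apply, ih (le_trans (hψ.2 j h1 hjn).le hjn),
        dp_succ hψ h1 hjn]
      omega

lemma compat_iter (hψ : IsHeap n ψ) (hφ : CompatFam n ψ φ) {j : ℕ}
    (h1 : 1 ≤ j) (hjn : j ≤ n) :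
    ∀ k m, m ≤ dp ψ (ψ^[k] j) → 1 ≤ ψ^[k] j → φ (ψ^[k] j) m = φ j m := by
  intro k
  induction k with
  | zero => intro m _ _; rfl
  | succ k ih =>
    intro m hm hpos
    rw [Function.iterate_succ_apply'] at hm hpos ⊢
    have hipos : 1 ≤ ψ^[k] j := by
      by_contra h
      have h0 : ψ^[k] j = 0 := by omega
      rw [h0, hψ.1] at hpos; omega
    have hin : ψ^[k] j ≤ n := le_trans (heap_iter_le hψ hjn k) hjn
    have hd : dp ψ (ψ^[k] j) = dp ψ (ψ (ψ^[k] j)) + 1 := dp_succ hψ hipos hin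
    rw [hφ.2 (ψ^[k] j) hipos hin hpos m (by omega)]
    exact ih m (by omega) hipos

lemma starNeAux (ψ : ℕ → ℕ) (φ : ℕ → ℕ → ℕ) {i : ℕ} (h : i ≠ 0) :
    star ψ φ i = ψ^[dp ψ i - φ i (dp ψ i)] i := by
  rw [_root_.star, if_neg h]

lemma starZeroAux (ψ : ℕ → ℕ) (φ : ℕ → ℕ → ℕ) : star ψ φ 0 = 0 := rfl

lemma star_iter (hψ : IsHeap n ψ) (hφ : CompatFam n ψ φ) {j : ℕ}
    (h1 : 1 ≤ j) (hjn : j ≤ n) (k : ℕ) :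
    (star ψ φ)^[k] j = ψ^[dp ψ j - (φ j)^[k] (dp ψ j)] j := by
  have hj : IsHeap (dp ψ j) (φ j) := hφ.1 j h1 hjn
  induction k with
  | zero => simp
  | succ k ih =>
    rw [Function.iterate_succ_apply', ih]
    have hmd : (φ j)^[k] (dp ψ j) ≤ dp ψ j := heap_iter_le hj le_rfl k
    have hstep : (φ j)^[k + 1] (dp ψ j) = φ j ((φ j)^[k] (dp ψ j)) :=
      Function.iterate_succ_apply' (φ j) k (dp ψ j)
    have hdpi : dp ψ (ψ^[dp ψ j - (φ j)^[k] (dp ψ j)] j) = (φ j)^[k] (dp ψ j) := by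
      rw [dp_iter hψ hjn]; omega
    rcases Nat.eq_zero_or_pos (ψ^[dp ψ j - (φ j)^[k] (dp ψ j)] j) with h0 | hpos
    · have hm0 : (φ j)^[k] (dp ψ j) = 0 := by rw [← hdpi, h0, dp_zero]
      rw [hstep, hm0, hj.1, Nat.sub_zero]
      rw [hm0, Nat.sub_zero] at h0
      rw [h0, starZeroAux]
    · have hin : ψ^[dp ψ j - (φ j)^[k] (dp ψ j)] j ≤ n :=
        le_trans (heap_iter_le hψ hjn _) hjn
      have hm1 : 1 ≤ (φ j)^[k] (dp ψ j) := hdpi ▸ dp_pos hψ hpos hin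
      have hφlt : φ j ((φ j)^[k] (dp ψ j)) < (φ j)^[k] (dp ψ j) := hj.2 _ hm1 hmd
      have hcompat : φ (ψ^[dp ψ j - (φ j)^[k] (dp ψ j)] j) ((φ j)^[k] (dp ψ j))
          = φ j ((φ j)^[k] (dp ψ j)) :=
        compat_iter hψ hφ h1 hjn _ _ (le_of_eq hdpi.symm) hpos
      rw [starNeAux ψ φ (by omega), hdpi, hcompat, ← Function.iterate_add_apply, hstep]
      congr 1
      omega

end Aux

/-- For `ψ ∈ Hp(n)` and a `ψ`-compatible family of heaps `φ`,
`ψ⋆φ` is a min-heap of size `n`, and for `i, j ∈ {1,…,n}`: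
`i ≼_{ψ⋆φ} j` iff `i ≼_ψ j` and `dp_ψ(i) ≼_{φ_j} dp_ψ(j)`. -/
theorem star_isHeap_and_order_characterisation (n : ℕ) (ψ : ℕ → ℕ) (hψ : IsHeap n ψ)
    (φ : ℕ → ℕ → ℕ) (hφ : CompatFam n ψ φ) :
    IsHeap n (star ψ φ) ∧
    ∀ i j, 1 ≤ i → i ≤ n → 1 ≤ j → j ≤ n →
      (hle (star ψ φ) i j ↔ hle ψ i j ∧ hle (φ j) (dp ψ i) (dp ψ j)) := by
  constructor
  · constructor
    · exact starZeroAux ψ φ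
    · intro i h1 hin
      have hd1 : 1 ≤ dp ψ i := dp_pos hψ h1 hin
      have hlt : φ i (dp ψ i) < dp ψ i := (hφ.1 i h1 hin).2 (dp ψ i) hd1 le_rfl
      rw [starNeAux ψ φ (by omega)]
      obtain ⟨e, he⟩ : ∃ e, dp ψ i - φ i (dp ψ i) = e + 1 :=
        ⟨dp ψ i - φ i (dp ψ i) - 1, by omega⟩
      rw [he, Function.iterate_succ_apply]
      calc ψ^[e] (ψ i) ≤ ψ i := heap_iter_le hψ (le_trans (hψ.2 i h1 hin).le hin) e
        _ < i := hψ.2 i h1 hin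
  · intro i j h1i hin h1j hjn
    set d := dp ψ j with hd
    have hj : IsHeap d (φ j) := hφ.1 j h1j hjn
    constructor
    · rintro ⟨k, hk⟩
      rw [star_iter hψ hφ h1j hjn k] at hk
      set m := (φ j)^[k] d with hm
      have hmd : m ≤ d := heap_iter_le hj le_rfl k
      have hdpi : dp ψ i = m := by
        rw [hk, dp_iter hψ hjn]; omega
      exact ⟨⟨d - m, hk⟩, ⟨k, hdpi⟩⟩
    · rintro ⟨⟨l, hl⟩, ⟨k, hk⟩⟩
      set m := (φ j)^[k] d with hm
      have hmd : m ≤ d := heap_iter_le hj le_rfl k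
      have hdpi : dp ψ i = d - l := by rw [hl, dp_iter hψ hjn]
      have hd1 : 1 ≤ dp ψ i := dp_pos hψ h1i hin
      refine ⟨k, ?_⟩
      rw [star_iter hψ hφ h1j hjn k, ← hm, hl]
      congr 1
      omega
end

section
/- Let N ≥ 0, let φ ∈ Hp(N), and let R be a binary relation on {1,…,N} such that i R j implies i < j and φ(i) = φ(j). Let ≤_k denote the reflexive–transitive closure of R, regarded as a partial order on {0,…,N} (relating 0 only to itself). Then: (a) i ≤_k j implies φ(i) = φ(j) for i, j ∈ {1,…,N}; (b) the function φ̄ defined by φ̄(0) = 0 and φ̄(i) = min{ j : j ≤_k φ(i) } for i ∈ {1,…,N} is a min-heap of size N; (c) dp_{φ̄}(i) = dp_φ(i) for all i ∈ {1,…,N}. -/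
lemma dpAux_congr (N : ℕ) (ψ : ℕ → ℕ) (hψ : IsHeap N ψ) :
    ∀ i, i ≤ N → ∀ F F', i ≤ F → i ≤ F' → dpAux ψ F i = dpAux ψ F' i := by
  intro i
  induction i using Nat.strong_induction_on with
  | _ i ih =>
    intro hiN F F' hF hF'
    rcases Nat.eq_zero_or_pos i with rfl | hi
    · cases F <;> cases F' <;> simp [dpAux]
    · obtain ⟨F₀, rfl⟩ : ∃ m, F = m + 1 := ⟨F - 1, by omega⟩
      obtain ⟨F₁, rfl⟩ : ∃ m, F' = m + 1 := ⟨F' - 1, by omega⟩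
      have hlt := hψ.2 i hi hiN
      simp only [dpAux, if_neg (by omega : i ≠ 0)]
      rw [ih (ψ i) hlt (by omega) F₀ F₁ (by omega) (by omega)]

lemma dp_step (N : ℕ) (ψ : ℕ → ℕ) (hψ : IsHeap N ψ) (i : ℕ) (h1 : 1 ≤ i)
    (hN : i ≤ N) : dp ψ i = dp ψ (ψ i) + 1 := by
  have hlt := hψ.2 i h1 hN
  obtain ⟨m, rfl⟩ : ∃ m, i = m + 1 := ⟨i - 1, by omega⟩
  show dpAux ψ (m + 1) (m + 1) = dpAux ψ (ψ (m + 1)) (ψ (m + 1)) + 1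
  simp only [dpAux, if_neg (by omega : m + 1 ≠ 0)]
  rw [dpAux_congr N ψ hψ (ψ (m + 1)) (by omega) m (ψ (m + 1)) (by omega) le_rfl]

/-- **Statement 15.** Let `φ ∈ Hp(N)` and let `R` be a relation on `{1,…,N}`
with `i R j → i < j ∧ φ i = φ j`.  Let `≤_k` be the reflexive–transitive
closure of `R`.  Then (a) `i ≤_k j` implies `φ i = φ j`; (b) the function
`φ̄` with `φ̄(0) = 0` and `φ̄(i) = min { j : j ≤_k φ(i) }` is a min-heap of
size `N`; (c) `dp_{φ̄} = dp_φ` on `{1,…,N}`. -/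
theorem barHeap_isHeap (N : ℕ) (φ : ℕ → ℕ) (hφ : IsHeap N φ)
    (R : ℕ → ℕ → Prop)
    (hR : ∀ i j, R i j → 1 ≤ i ∧ i < j ∧ j ≤ N ∧ φ i = φ j) :
    (∀ i j, Relation.ReflTransGen R i j → φ i = φ j) ∧
    IsHeap N (fun i => if i = 0 then 0 else
      sInf {j | Relation.ReflTransGen R j (φ i)}) ∧
    (∀ i, 1 ≤ i → i ≤ N →
      dp (fun i => if i = 0 then 0 else
        sInf {j | Relation.ReflTransGen R j (φ i)}) i = dp φ i) := by

  set φb : ℕ → ℕ := fun i => if i = 0 then 0 else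
      sInf {j | Relation.ReflTransGen R j (φ i)} with hφb
  have ha : ∀ i j, Relation.ReflTransGen R i j → φ i = φ j := by
    intro i j h
    induction h with
    | refl => rfl
    | tail _ hbc ih => exact ih.trans (hR _ _ hbc).2.2.2
  have hmono : ∀ i j, Relation.ReflTransGen R i j → i ≤ j := by
    intro i j h
    induction h with
    | refl => exact le_rfl
    | tail _ hbc ih => exact ih.trans (le_of_lt (hR _ _ hbc).2.1)
  have hne : ∀ i, {j | Relation.ReflTransGen R j (φ i)}.Nonempty :=
    fun i => ⟨φ i, Relation.ReflTransGen.refl⟩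
  have hmem : ∀ i, sInf {j | Relation.ReflTransGen R j (φ i)} ∈
      {j | Relation.ReflTransGen R j (φ i)} := fun i => Nat.sInf_mem (hne i)
  have hbar_le : ∀ i, sInf {j | Relation.ReflTransGen R j (φ i)} ≤ φ i :=
    fun i => Nat.sInf_le Relation.ReflTransGen.refl
  have hzero : ∀ i, sInf {j | Relation.ReflTransGen R j (φ i)} = 0 ↔ φ i = 0 := by
    intro i
    constructor
    · intro h
      have h0 : Relation.ReflTransGen R 0 (φ i) := h ▸ hmem i
      rcases Relation.ReflTransGen.cases_head h0 with h' | ⟨c, hc, _⟩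
      · exact h'.symm
      · exact absurd (hR _ _ hc).1 (by omega)
    · intro h
      have h0 : (0 : ℕ) ∈ {j | Relation.ReflTransGen R j (φ i)} := by
        show Relation.ReflTransGen R 0 (φ i)
        rw [h]
      exact Nat.eq_zero_of_le_zero (Nat.sInf_le h0)
  have hheap : IsHeap N φb := by
    constructor
    · simp [hφb]
    · intro i h1 h2
      simp only [hφb, if_neg (by omega : i ≠ 0)]
      exact lt_of_le_of_lt (hbar_le i) (hφ.2 i h1 h2)
  refine ⟨ha, hheap, ?_⟩
  have key : ∀ a, a ≤ N → ∀ b, b ≤ N → φ a = φ b → (a = 0 ↔ b = 0) →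
      dp φb a = dp φ b := by
    intro a
    induction a using Nat.strong_induction_on with
    | _ a ih =>
      intro haN b hbN hab hiff
      rcases Nat.eq_zero_or_pos a with rfl | ha1
      · have hb0 : b = 0 := hiff.mp rfl
        subst hb0; rfl
      · have hb1 : 1 ≤ b := by
          rcases Nat.eq_zero_or_pos b with rfl | h
          · exact absurd (hiff.mpr rfl) (by omega)
          · exact h
        rw [dp_step N φb hheap a ha1 haN, dp_step N φ hφ b hb1 hbN]
        have hfa : φb a = sInf {j | Relation.ReflTransGen R j (φ a)} := by
          simp [hφb, if_neg (by omega : a ≠ 0)]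
        have h1 : φ (φb a) = φ (φ b) := by
          rw [hfa, ← hab]; exact ha _ _ (hmem a)
        have h2 : φb a = 0 ↔ φ b = 0 := by
          rw [hfa, hzero a, hab]
        have hlt : φb a < a := lt_of_le_of_lt (hfa ▸ hbar_le a) (hφ.2 a ha1 haN)
        have h3 : φb a ≤ N := by omega
        have h4 : φ b ≤ N := lt_of_lt_of_le (hφ.2 b hb1 hbN) hbN |>.le
        rw [ih (φb a) hlt h3 (φ b) h4 h1 h2]
  intro i h1 h2
  exact key i h2 i h2 rfl Iff.rfl
end
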